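/- arXiv:2209.09800 — 6 statements merged into one kernel-verified Lean document; each statement's English description precedes it below -/
import Mathlib

section
/- For natural numbers n₁, n₂ ≥ 2 with n = n₁ + n₂ − 1, we have (3n₁ − √(12n₁ − 3)) + (3n₂ − √(12n₂ − 3)) < 3n − √(12n − 3). -/
theorem cut_vertex_ineq (n n₁ n₂ : ℕ) (h₁ : 2 ≤ n₁) (h₂ : 2 ≤ n₂)
    (hn : n = n₁ + n₂ - 1) :
    (3 * (n₁ : ℝ) - Real.sqrt (12 * n₁ - 3)) + (3 * (n₂ : ℝ) - Real.sqrt (12 * n₂ - 3)) <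
      3 * (n : ℝ) - Real.sqrt (12 * n - 3) := by
  have hcast : (n : ℝ) = (n₁ : ℝ) + (n₂ : ℝ) - 1 := by
    subst hn
    push_cast [Nat.cast_sub (by omega : 1 ≤ n₁ + n₂)]
    ring
  have hn₁ : (2 : ℝ) ≤ (n₁ : ℝ) := by exact_mod_cast h₁
  have hn₂ : (2 : ℝ) ≤ (n₂ : ℝ) := by exact_mod_cast h₂
  set a := Real.sqrt (12 * (n₁ : ℝ) - 3) with ha
  set b := Real.sqrt (12 * (n₂ : ℝ) - 3) with hb
  set c := Real.sqrt (12 * (n : ℝ) - 3) with hc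
  have ha0 : 0 ≤ a := Real.sqrt_nonneg _
  have hb0 : 0 ≤ b := Real.sqrt_nonneg _
  have hc0 : 0 ≤ c := Real.sqrt_nonneg _
  have ha2 : a ^ 2 = 12 * (n₁ : ℝ) - 3 := Real.sq_sqrt (by linarith)
  have hb2 : b ^ 2 = 12 * (n₂ : ℝ) - 3 := Real.sq_sqrt (by linarith)
  have hc2 : c ^ 2 = 12 * (n : ℝ) - 3 := Real.sq_sqrt (by nlinarith)
  have ha21 : 21 ≤ a ^ 2 := by nlinarith
  have hb21 : 21 ≤ b ^ 2 := by nlinarith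
  have hsum : a ^ 2 + b ^ 2 = c ^ 2 + 9 := by rw [ha2, hb2, hc2, hcast]; ring
  have hab : 3 * c < a * b := by
    nlinarith [sq_nonneg (a * b - 3 * c), mul_pos (by nlinarith : (0:ℝ) < a ^ 2 - 9)
      (by nlinarith : (0:ℝ) < b ^ 2 - 9), mul_nonneg ha0 hb0]
  have key : c + 3 < a + b := by nlinarith [sq_nonneg (a + b - c - 3)]
  linarith
end

section
/- For natural numbers n₁, n₂ ≥ 3 with n₁ + n₂ = n + 2 and n ≥ 8, we have (3n₁ − √(12n₁ − 3)) + (3n₂ − √(12n₂ − 3)) − 1 < 3n − √(12n − 3). -/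
theorem quadrilateral_split_ineq (n n₁ n₂ : ℕ) (h₁ : 3 ≤ n₁) (h₂ : 3 ≤ n₂)
    (hsum : n₁ + n₂ = n + 2) (hn : 8 ≤ n) :
    (3 * (n₁ : ℝ) - Real.sqrt (12 * n₁ - 3)) + (3 * (n₂ : ℝ) - Real.sqrt (12 * n₂ - 3)) - 1 <
      3 * (n : ℝ) - Real.sqrt (12 * n - 3) := by
  have hn₁ : (3 : ℝ) ≤ n₁ := by exact_mod_cast h₁
  have hn₂ : (3 : ℝ) ≤ n₂ := by exact_mod_cast h₂
  have hnr : (8 : ℝ) ≤ n := by exact_mod_cast hn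
  have hs : (n₁ : ℝ) + n₂ = n + 2 := by exact_mod_cast congrArg (Nat.cast : ℕ → ℝ) hsum
  set A := Real.sqrt (12 * (n₁:ℝ) - 3) with hAdef
  set B := Real.sqrt (12 * (n₂:ℝ) - 3) with hBdef
  set C := Real.sqrt (12 * (n:ℝ) - 3) with hCdef
  have hA0 : 0 ≤ A := Real.sqrt_nonneg _
  have hB0 : 0 ≤ B := Real.sqrt_nonneg _
  have hC0 : 0 ≤ C := Real.sqrt_nonneg _
  have hA2 : A ^ 2 = 12 * (n₁:ℝ) - 3 := Real.sq_sqrt (by linarith)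
  have hB2 : B ^ 2 = 12 * (n₂:ℝ) - 3 := Real.sq_sqrt (by linarith)
  have hC2 : C ^ 2 = 12 * (n:ℝ) - 3 := Real.sq_sqrt (by linarith)
  have hA33 : 33 ≤ A ^ 2 := by rw [hA2]; linarith
  have hB33 : 33 ≤ B ^ 2 := by rw [hB2]; linarith
  have hsum2 : A ^ 2 + B ^ 2 = C ^ 2 + 21 := by rw [hA2, hB2, hC2]; linarith
  have hC93 : 93 ≤ C ^ 2 := by rw [hC2]; linarith
  have hCge : 9 < C := by nlinarith
  have hab : 33 * C ^ 2 - 396 ≤ A ^ 2 * B ^ 2 := by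
    nlinarith [mul_nonneg (by linarith : (0:ℝ) ≤ A ^ 2 - 33) (by linarith : (0:ℝ) ≤ B ^ 2 - 33)]
  have hsq : (10 * C + 4) ^ 2 < (2 * (A * B)) ^ 2 := by
    have h1 : 32 * C ^ 2 - 80 * C - 1600 > 0 := by nlinarith [sq_nonneg (C - 9)]
    nlinarith
  have hAB : 10 * C + 4 < 2 * (A * B) :=
    lt_of_pow_lt_pow_left₀ 2 (by positivity) hsq
  have key : C + 5 < A + B := by
    have h2 : (C + 5) ^ 2 < (A + B) ^ 2 := by nlinarith
    exact lt_of_pow_lt_pow_left₀ 2 (by positivity) h2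
  linarith
end

section
/- In any triangle pqr in the Euclidean plane with angle at r equal to 120°, one has dist(p,r) + dist(q,r) ≤ (2/√3)·dist(p,q). -/
open EuclideanGeometry

theorem angle120_side_sum (p q r : EuclideanSpace ℝ (Fin 2))
    (h : ∠ p r q = 2 * Real.pi / 3) :
    dist p r + dist q r ≤ (2 / Real.sqrt 3) * dist p q := by
  have hlc := EuclideanGeometry.law_cos p r q
  rw [h] at hlc
  have hcos : Real.cos (2 * Real.pi / 3) = -(1/2) := by
    have : 2 * Real.pi / 3 = Real.pi - Real.pi / 3 := by ring
    rw [this, Real.cos_pi_sub, Real.cos_pi_div_three]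
  rw [hcos] at hlc
  set a := dist p r
  set b := dist q r
  set c := dist p q
  have ha : 0 ≤ a := dist_nonneg
  have hb : 0 ≤ b := dist_nonneg
  have hc : 0 ≤ c := dist_nonneg
  have hs3 : Real.sqrt 3 > 0 := Real.sqrt_pos.mpr (by norm_num)
  rw [div_mul_eq_mul_div, le_div_iff₀ hs3]
  have hsq : Real.sqrt 3 ^ 2 = 3 := Real.sq_sqrt (by norm_num)
  have key : ((a + b) * Real.sqrt 3) ^ 2 ≤ (2 * c) ^ 2 := by
    nlinarith [sq_nonneg (a - b)]
  exact (pow_le_pow_iff_left₀ (mul_nonneg (add_nonneg ha hb) hs3.le)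
    (by positivity) two_ne_zero).mp key
end

section
/- Let a, b be distinct points of a triangular lattice L in the plane, and let c be a point with dist(c,a) = 1 and dist(c,b) = 1. Then c ∈ L. -/
/-- A triangular lattice in the plane: all points `x₀ + m • u + n • v` with `m n : ℤ`,
where `u, v` are unit vectors at angle 60° (i.e. `⟪u, v⟫ = 1/2`). -/
def IsTriangularLattice (L : Set (EuclideanSpace ℝ (Fin 2))) : Prop :=
  ∃ (x₀ u v : EuclideanSpace ℝ (Fin 2)), ‖u‖ = 1 ∧ ‖v‖ = 1 ∧
    inner ℝ u v = (1 / 2 : ℝ) ∧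
    L = {x | ∃ m n : ℤ, x = x₀ + (m : ℝ) • u + (n : ℝ) • v}

private lemma key_quad (p q : ℤ) (hne : ¬(p = 0 ∧ q = 0)) (hN4 : p ^ 2 + p * q + q ^ 2 ≤ 4)
    (s t : ℝ) (h1 : s ^ 2 + s * t + t ^ 2 = 1)
    (h2 : (s + (p : ℝ)) ^ 2 + (s + (p : ℝ)) * (t + (q : ℝ)) + (t + (q : ℝ)) ^ 2 = 1) :
    ∃ k l : ℤ, s = (k : ℝ) ∧ t = (l : ℝ) := by
  have hq2 : q ^ 2 ≤ 5 := by nlinarith [sq_nonneg (2 * p + q)]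
  have hp2 : p ^ 2 ≤ 5 := by nlinarith [sq_nonneg (p + 2 * q)]
  have hqu : q ≤ 2 := by nlinarith [sq_nonneg (q - 3)]
  have hql : -2 ≤ q := by nlinarith [sq_nonneg (q + 3)]
  have hpu : p ≤ 2 := by nlinarith [sq_nonneg (p - 3)]
  have hpl : -2 ≤ p := by nlinarith [sq_nonneg (p + 3)]
  interval_cases p <;> interval_cases q
  · norm_num at hN4
  · norm_num at hN4
  · -- p = -2, q = 0
    push_cast at h2
    have hg : (s - 1) * (s - 1) = 0 := by linear_combination ((0 + 2*s + (-2)*t)/12) * h1 + ((4 + (-2)*s + 2*t)/12) * h2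
    rcases mul_eq_zero.1 hg with hs | hs
    · exact ⟨1, 0, by push_cast; linarith [hs], by push_cast; linear_combination (1/(-2))*h2 - (1/(-2))*h1 - ((-4)/(-2))*hs⟩
    · exact ⟨1, 0, by push_cast; linarith [hs], by push_cast; linear_combination (1/(-2))*h2 - (1/(-2))*h1 - ((-4)/(-2))*hs⟩
  · -- p = -2, q = 1
    push_cast at h2
    have hg : (t - 0) * (t - (-1)) = 0 := by linear_combination ((6 + (-3)*t + (-3)*s)/9) * h1 + ((3 + 3*t + 3*s)/9) * h2
    rcases mul_eq_zero.1 hg with hs | hs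
    · exact ⟨1, 0, by push_cast; linear_combination (1/(-3))*h2 - (1/(-3))*h1 - (0/(-3))*hs, by push_cast; linarith [hs]⟩
    · exact ⟨1, (-1), by push_cast; linear_combination (1/(-3))*h2 - (1/(-3))*h1 - (0/(-3))*hs, by push_cast; linarith [hs]⟩
  · -- p = -2, q = 2
    push_cast at h2
    have hg : (s - 1) * (s - 1) = 0 := by linear_combination ((0 + 4*s + 2*t)/12) * h1 + ((4 + (-4)*s + (-2)*t)/12) * h2
    rcases mul_eq_zero.1 hg with hs | hs
    · exact ⟨1, (-1), by push_cast; linarith [hs], by push_cast; linear_combination (1/2)*h2 - (1/2)*h1 - ((-2)/2)*hs⟩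
    · exact ⟨1, (-1), by push_cast; linarith [hs], by push_cast; linear_combination (1/2)*h2 - (1/2)*h1 - ((-2)/2)*hs⟩
  · norm_num at hN4
  · -- p = -1, q = -1
    push_cast at h2
    have hg : (s - 1) * (s - 0) = 0 := by linear_combination ((6 + 0*s + (-3)*t)/9) * h1 + ((3 + 0*s + 3*t)/9) * h2
    rcases mul_eq_zero.1 hg with hs | hs
    · exact ⟨1, 0, by push_cast; linarith [hs], by push_cast; linear_combination (1/(-3))*h2 - (1/(-3))*h1 - ((-3)/(-3))*hs⟩
    · exact ⟨0, 1, by push_cast; linarith [hs], by push_cast; linear_combination (1/(-3))*h2 - (1/(-3))*h1 - ((-3)/(-3))*hs⟩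
  · -- p = -1, q = 0
    push_cast at h2
    have hg : (s - 1) * (s - 0) = 0 := by linear_combination ((0 + 1*s + (-1)*t)/3) * h1 + ((1 + (-1)*s + 1*t)/3) * h2
    rcases mul_eq_zero.1 hg with hs | hs
    · exact ⟨1, (-1), by push_cast; linarith [hs], by push_cast; linear_combination (1/(-1))*h2 - (1/(-1))*h1 - ((-2)/(-1))*hs⟩
    · exact ⟨0, 1, by push_cast; linarith [hs], by push_cast; linear_combination (1/(-1))*h2 - (1/(-1))*h1 - ((-2)/(-1))*hs⟩
  · -- p = -1, q = 1
    push_cast at h2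
    have hg : (s - 1) * (s - 0) = 0 := by linear_combination ((0 + 2*s + 1*t)/3) * h1 + ((1 + (-2)*s + (-1)*t)/3) * h2
    rcases mul_eq_zero.1 hg with hs | hs
    · exact ⟨1, 0, by push_cast; linarith [hs], by push_cast; linear_combination (1/1)*h2 - (1/1)*h1 - ((-1)/1)*hs⟩
    · exact ⟨0, (-1), by push_cast; linarith [hs], by push_cast; linear_combination (1/1)*h2 - (1/1)*h1 - ((-1)/1)*hs⟩
  · -- p = -1, q = 2
    push_cast at h2
    have hg : (s - 1) * (s - 0) = 0 := by linear_combination ((6 + 3*s + 3*t)/9) * h1 + ((3 + (-3)*s + (-3)*t)/9) * h2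
    rcases mul_eq_zero.1 hg with hs | hs
    · exact ⟨1, (-1), by push_cast; linarith [hs], by push_cast; linear_combination (1/3)*h2 - (1/3)*h1 - (0/3)*hs⟩
    · exact ⟨0, (-1), by push_cast; linarith [hs], by push_cast; linear_combination (1/3)*h2 - (1/3)*h1 - (0/3)*hs⟩
  · -- p = 0, q = -2
    push_cast at h2
    have hg : (s - 0) * (s - 0) = 0 := by linear_combination ((12 + (-2)*s + (-4)*t)/12) * h1 + ((4 + 2*s + 4*t)/12) * h2
    rcases mul_eq_zero.1 hg with hs | hs
    · exact ⟨0, 1, by push_cast; linarith [hs], by push_cast; linear_combination (1/(-4))*h2 - (1/(-4))*h1 - ((-2)/(-4))*hs⟩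
    · exact ⟨0, 1, by push_cast; linarith [hs], by push_cast; linear_combination (1/(-4))*h2 - (1/(-4))*h1 - ((-2)/(-4))*hs⟩
  · -- p = 0, q = -1
    push_cast at h2
    have hg : (s - 1) * (s - (-1)) = 0 := by linear_combination ((3 + (-1)*s + (-2)*t)/3) * h1 + ((1 + 1*s + 2*t)/3) * h2
    rcases mul_eq_zero.1 hg with hs | hs
    · exact ⟨1, 0, by push_cast; linarith [hs], by push_cast; linear_combination (1/(-2))*h2 - (1/(-2))*h1 - ((-1)/(-2))*hs⟩
    · exact ⟨(-1), 1, by push_cast; linarith [hs], by push_cast; linear_combination (1/(-2))*h2 - (1/(-2))*h1 - ((-1)/(-2))*hs⟩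
  · exact absurd ⟨rfl, rfl⟩ hne
  · -- p = 0, q = 1
    push_cast at h2
    have hg : (s - 1) * (s - (-1)) = 0 := by linear_combination ((3 + 1*s + 2*t)/3) * h1 + ((1 + (-1)*s + (-2)*t)/3) * h2
    rcases mul_eq_zero.1 hg with hs | hs
    · exact ⟨1, (-1), by push_cast; linarith [hs], by push_cast; linear_combination (1/2)*h2 - (1/2)*h1 - (1/2)*hs⟩
    · exact ⟨(-1), 0, by push_cast; linarith [hs], by push_cast; linear_combination (1/2)*h2 - (1/2)*h1 - (1/2)*hs⟩
  · -- p = 0, q = 2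
    push_cast at h2
    have hg : (s - 0) * (s - 0) = 0 := by linear_combination ((12 + 2*s + 4*t)/12) * h1 + ((4 + (-2)*s + (-4)*t)/12) * h2
    rcases mul_eq_zero.1 hg with hs | hs
    · exact ⟨0, (-1), by push_cast; linarith [hs], by push_cast; linear_combination (1/4)*h2 - (1/4)*h1 - (2/4)*hs⟩
    · exact ⟨0, (-1), by push_cast; linarith [hs], by push_cast; linear_combination (1/4)*h2 - (1/4)*h1 - (2/4)*hs⟩
  · -- p = 1, q = -2
    push_cast at h2
    have hg : (s - 0) * (s - (-1)) = 0 := by linear_combination ((6 + (-3)*s + (-3)*t)/9) * h1 + ((3 + 3*s + 3*t)/9) * h2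
    rcases mul_eq_zero.1 hg with hs | hs
    · exact ⟨0, 1, by push_cast; linarith [hs], by push_cast; linear_combination (1/(-3))*h2 - (1/(-3))*h1 - (0/(-3))*hs⟩
    · exact ⟨(-1), 1, by push_cast; linarith [hs], by push_cast; linear_combination (1/(-3))*h2 - (1/(-3))*h1 - (0/(-3))*hs⟩
  · -- p = 1, q = -1
    push_cast at h2
    have hg : (s - 0) * (s - (-1)) = 0 := by linear_combination ((0 + (-2)*s + (-1)*t)/3) * h1 + ((1 + 2*s + 1*t)/3) * h2
    rcases mul_eq_zero.1 hg with hs | hs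
    · exact ⟨0, 1, by push_cast; linarith [hs], by push_cast; linear_combination (1/(-1))*h2 - (1/(-1))*h1 - (1/(-1))*hs⟩
    · exact ⟨(-1), 0, by push_cast; linarith [hs], by push_cast; linear_combination (1/(-1))*h2 - (1/(-1))*h1 - (1/(-1))*hs⟩
  · -- p = 1, q = 0
    push_cast at h2
    have hg : (s - 0) * (s - (-1)) = 0 := by linear_combination ((0 + (-1)*s + 1*t)/3) * h1 + ((1 + 1*s + (-1)*t)/3) * h2
    rcases mul_eq_zero.1 hg with hs | hs
    · exact ⟨0, (-1), by push_cast; linarith [hs], by push_cast; linear_combination (1/1)*h2 - (1/1)*h1 - (2/1)*hs⟩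
    · exact ⟨(-1), 1, by push_cast; linarith [hs], by push_cast; linear_combination (1/1)*h2 - (1/1)*h1 - (2/1)*hs⟩
  · -- p = 1, q = 1
    push_cast at h2
    have hg : (s - 0) * (s - (-1)) = 0 := by linear_combination ((6 + 0*s + 3*t)/9) * h1 + ((3 + 0*s + (-3)*t)/9) * h2
    rcases mul_eq_zero.1 hg with hs | hs
    · exact ⟨0, (-1), by push_cast; linarith [hs], by push_cast; linear_combination (1/3)*h2 - (1/3)*h1 - (3/3)*hs⟩
    · exact ⟨(-1), 0, by push_cast; linarith [hs], by push_cast; linear_combination (1/3)*h2 - (1/3)*h1 - (3/3)*hs⟩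
  · norm_num at hN4
  · -- p = 2, q = -2
    push_cast at h2
    have hg : (s - (-1)) * (s - (-1)) = 0 := by linear_combination ((0 + (-4)*s + (-2)*t)/12) * h1 + ((4 + 4*s + 2*t)/12) * h2
    rcases mul_eq_zero.1 hg with hs | hs
    · exact ⟨(-1), 1, by push_cast; linarith [hs], by push_cast; linear_combination (1/(-2))*h2 - (1/(-2))*h1 - (2/(-2))*hs⟩
    · exact ⟨(-1), 1, by push_cast; linarith [hs], by push_cast; linear_combination (1/(-2))*h2 - (1/(-2))*h1 - (2/(-2))*hs⟩
  · -- p = 2, q = -1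
    push_cast at h2
    have hg : (t - 1) * (t - 0) = 0 := by linear_combination ((6 + 3*t + 3*s)/9) * h1 + ((3 + (-3)*t + (-3)*s)/9) * h2
    rcases mul_eq_zero.1 hg with hs | hs
    · exact ⟨(-1), 1, by push_cast; linear_combination (1/3)*h2 - (1/3)*h1 - (0/3)*hs, by push_cast; linarith [hs]⟩
    · exact ⟨(-1), 0, by push_cast; linear_combination (1/3)*h2 - (1/3)*h1 - (0/3)*hs, by push_cast; linarith [hs]⟩
  · -- p = 2, q = 0
    push_cast at h2
    have hg : (s - (-1)) * (s - (-1)) = 0 := by linear_combination ((0 + (-2)*s + 2*t)/12) * h1 + ((4 + 2*s + (-2)*t)/12) * h2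
    rcases mul_eq_zero.1 hg with hs | hs
    · exact ⟨(-1), 0, by push_cast; linarith [hs], by push_cast; linear_combination (1/2)*h2 - (1/2)*h1 - (4/2)*hs⟩
    · exact ⟨(-1), 0, by push_cast; linarith [hs], by push_cast; linear_combination (1/2)*h2 - (1/2)*h1 - (4/2)*hs⟩
  · norm_num at hN4
  · norm_num at hN4

theorem lattice_lemma (L : Set (EuclideanSpace ℝ (Fin 2))) (hL : IsTriangularLattice L)
    (a b c : EuclideanSpace ℝ (Fin 2)) (ha : a ∈ L) (hb : b ∈ L) (hab : a ≠ b)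
    (hca : dist c a = 1) (hcb : dist c b = 1) : c ∈ L := by
  obtain ⟨x₀, u, v, hu, hv, huv, rfl⟩ := hL
  obtain ⟨m₁, n₁, rfl⟩ := ha
  obtain ⟨m₂, n₂, rfl⟩ := hb
  have huu : (inner ℝ u u : ℝ) = 1 := by
    rw [real_inner_self_eq_norm_sq, hu]; norm_num
  have hvv : (inner ℝ v v : ℝ) = 1 := by
    rw [real_inner_self_eq_norm_sq, hv]; norm_num
  have hvu : (inner ℝ v u : ℝ) = 1 / 2 := by rw [real_inner_comm]; exact huv
  have hli : LinearIndependent ℝ ![u, v] := by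
    rw [LinearIndependent.pair_iff]
    intro x y hxy
    have h1 : (inner ℝ u (x • u + y • v) : ℝ) = 0 := by rw [hxy, inner_zero_right]
    have h2 : (inner ℝ v (x • u + y • v) : ℝ) = 0 := by rw [hxy, inner_zero_right]
    rw [inner_add_right, real_inner_smul_right, real_inner_smul_right, huu, huv] at h1
    rw [inner_add_right, real_inner_smul_right, real_inner_smul_right, hvu, hvv] at h2
    constructor <;> linarith
  have hspan : Submodule.span ℝ (Set.range ![u, v]) = ⊤ := by
    apply hli.span_eq_top_of_card_eq_finrank
    simp [finrank_euclideanSpace]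
  have hrange : Set.range ![u, v] = {u, v} := by
    ext x
    simp only [Matrix.range_cons, Matrix.range_empty, Set.union_empty, Set.union_singleton,
      Set.mem_insert_iff, Set.mem_singleton_iff]
    tauto
  have hc : c - (x₀ + (m₁ : ℝ) • u + (n₁ : ℝ) • v) ∈ Submodule.span ℝ ({u, v} : Set _) := by
    rw [← hrange, hspan]; trivial
  obtain ⟨s, t, hst⟩ := Submodule.mem_span_pair.1 hc
  have hce : c = x₀ + (m₁ : ℝ) • u + (n₁ : ℝ) • v + (s • u + t • v) := by
    rw [hst]; abel
  have hnorm : ∀ x y : ℝ, ‖x • u + y • v‖ ^ 2 = x ^ 2 + x * y + y ^ 2 := by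
    intro x y
    rw [← real_inner_self_eq_norm_sq]
    simp only [inner_add_right, inner_add_left, real_inner_smul_left, real_inner_smul_right,
      huu, hvv, huv, hvu]
    ring
  have h1 : s ^ 2 + s * t + t ^ 2 = 1 := by
    have hn : ‖c - (x₀ + (m₁ : ℝ) • u + (n₁ : ℝ) • v)‖ = 1 := by
      rw [← dist_eq_norm]; exact hca
    rw [← hst] at hn
    rw [← hnorm s t, hn, one_pow]
  have hcb' : c - (x₀ + (m₂ : ℝ) • u + (n₂ : ℝ) • v)
      = (s + ((m₁ - m₂ : ℤ) : ℝ)) • u + (t + ((n₁ - n₂ : ℤ) : ℝ)) • v := by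
    rw [hce]; push_cast; module
  have h2 : (s + ((m₁ - m₂ : ℤ) : ℝ)) ^ 2
      + (s + ((m₁ - m₂ : ℤ) : ℝ)) * (t + ((n₁ - n₂ : ℤ) : ℝ))
      + (t + ((n₁ - n₂ : ℤ) : ℝ)) ^ 2 = 1 := by
    have hn : ‖c - (x₀ + (m₂ : ℝ) • u + (n₂ : ℝ) • v)‖ = 1 := by
      rw [← dist_eq_norm]; exact hcb
    rw [hcb'] at hn
    rw [← hnorm, hn, one_pow]
  have hne : ¬(m₁ - m₂ = 0 ∧ n₁ - n₂ = 0) := by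
    rintro ⟨hp0, hq0⟩
    apply hab
    have h3 : m₁ = m₂ := by omega
    have h4 : n₁ = n₂ := by omega
    rw [h3, h4]
  have hN4 : (m₁ - m₂) ^ 2 + (m₁ - m₂) * (n₁ - n₂) + (n₁ - n₂) ^ 2 ≤ 4 := by
    have hd : ‖((m₁ - m₂ : ℤ) : ℝ) • u + ((n₁ - n₂ : ℤ) : ℝ) • v‖ ≤ 2 := by
      have he : ((m₁ - m₂ : ℤ) : ℝ) • u + ((n₁ - n₂ : ℤ) : ℝ) • v
          = (c - (x₀ + (m₂ : ℝ) • u + (n₂ : ℝ) • v))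
            - (c - (x₀ + (m₁ : ℝ) • u + (n₁ : ℝ) • v)) := by
        push_cast; module
      rw [he]
      calc ‖_ - _‖ ≤ ‖c - (x₀ + (m₂ : ℝ) • u + (n₂ : ℝ) • v)‖
            + ‖c - (x₀ + (m₁ : ℝ) • u + (n₁ : ℝ) • v)‖ := norm_sub_le _ _
        _ ≤ 2 := by
            rw [← dist_eq_norm, ← dist_eq_norm, hca, hcb]; norm_num
    have hd2 : (((m₁ - m₂ : ℤ) : ℝ)) ^ 2 + ((m₁ - m₂ : ℤ) : ℝ) * ((n₁ - n₂ : ℤ) : ℝ)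
        + ((n₁ - n₂ : ℤ) : ℝ) ^ 2 ≤ 4 := by
      have hh := hnorm ((m₁ - m₂ : ℤ) : ℝ) ((n₁ - n₂ : ℤ) : ℝ)
      nlinarith [norm_nonneg (((m₁ - m₂ : ℤ) : ℝ) • u + ((n₁ - n₂ : ℤ) : ℝ) • v)]
    exact_mod_cast hd2
  obtain ⟨k, l, hk, hl⟩ := key_quad (m₁ - m₂) (n₁ - n₂) hne hN4 s t h1 h2
  refine ⟨m₁ + k, n₁ + l, ?_⟩
  rw [hce, hk, hl]
  push_cast
  module
end

section
/- Let φ = √(12n − 3) − 3 for a real n, and suppose F is a real number with F ≥ 2, F < φ − π√3/2, and F² − (2φ − π√3)·F + (1 − π√3/6)·φ² > 0. If n ≥ 5, then n ≥ 147. -/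
set_option maxHeartbeats 1000000

private lemma aux_q2 (x a : ℝ) (h1 : 4.72 ≤ x) (h2 : x ≤ 38.8211)
    (h3 : 5.4413 ≤ a) (h4 : a ≤ 5.4415) :
    2 ^ 2 - (2 * x - a) * 2 + (1 - a / 6) * x ^ 2 ≤ 0 := by
  nlinarith [mul_nonneg (sub_nonneg.2 h3) (sub_nonneg.2 (show (12:ℝ) ≤ x^2 by nlinarith)),
    mul_nonneg (sub_nonneg.2 h1) (sub_nonneg.2 h2)]

private lemma aux_qT (x a : ℝ) (h1 : 4.72 ≤ x) (h3 : 5.4413 ≤ a) (h4 : a ≤ 5.4415) :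
    (x - a / 2) ^ 2 - (2 * x - a) * (x - a / 2) + (1 - a / 6) * x ^ 2 ≤ 0 := by
  nlinarith [mul_nonneg (show (0:ℝ) ≤ a by linarith)
    (show (0:ℝ) ≤ x^2 - 6*x + 3*a/2 by nlinarith)]

private lemma aux_convex (x a F : ℝ) (hF2 : 2 ≤ F) (hTF : F ≤ x - a / 2)
    (hq2 : 2 ^ 2 - (2 * x - a) * 2 + (1 - a / 6) * x ^ 2 ≤ 0)
    (hqT : (x - a / 2) ^ 2 - (2 * x - a) * (x - a / 2) + (1 - a / 6) * x ^ 2 ≤ 0)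
    (hquad : F ^ 2 - (2 * x - a) * F + (1 - a / 6) * x ^ 2 > 0) : False := by
  nlinarith [mul_nonneg (sub_nonneg.2 hTF) (neg_nonneg.2 hq2),
    mul_nonneg (sub_nonneg.2 hF2) (neg_nonneg.2 hqT),
    mul_nonneg (mul_nonneg (show (0:ℝ) ≤ x - a/2 - 2 by linarith)
      (sub_nonneg.2 hF2)) (sub_nonneg.2 hTF),
    mul_pos (show (0:ℝ) < x - a / 2 - 2 by nlinarith) hquad]

theorem n_ge_147 (n : ℕ) (hn : 5 ≤ n) (F : ℝ) (hF2 : 2 ≤ F)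
    (hFub : F < (Real.sqrt (12 * n - 3) - 3) - Real.pi * Real.sqrt 3 / 2)
    (hquad : F ^ 2 - (2 * (Real.sqrt (12 * n - 3) - 3) - Real.pi * Real.sqrt 3) * F
        + (1 - Real.pi * Real.sqrt 3 / 6) * (Real.sqrt (12 * n - 3) - 3) ^ 2 > 0) :
    147 ≤ n := by
  by_contra h
  push_neg at h
  have hn146 : (n : ℝ) ≤ 146 := by
    have : n ≤ 146 := Nat.lt_succ_iff.mp h
    exact_mod_cast this
  set p := Real.pi with hp
  set r := Real.sqrt 3 with hr
  set s := Real.sqrt (12 * n - 3) with hs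
  have hr2 : r ^ 2 = 3 := Real.sq_sqrt (by norm_num)
  have hrnn : (0:ℝ) ≤ r := Real.sqrt_nonneg 3
  have hrlb : 1.73205 ≤ r := by nlinarith
  have hrub : r ≤ 1.73206 := by nlinarith
  have hplb : 3.141592 ≤ p := Real.pi_gt_d6.le
  have hpub : p ≤ 3.141593 := Real.pi_lt_d6.le
  have hnn : (12 : ℝ) * n - 3 ≥ 0 := by
    have : (5:ℝ) ≤ n := by exact_mod_cast hn
    nlinarith
  have hs2 : s ^ 2 = 12 * n - 3 := Real.sq_sqrt hnn
  have hsnn : 0 ≤ s := Real.sqrt_nonneg _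
  have hsub : s ≤ 41.8211 := by nlinarith
  have halb : 5.4413 ≤ p * r := by nlinarith
  have haub : p * r ≤ 5.4415 := by nlinarith
  have hT : 2 < s - 3 - p * r / 2 := lt_of_le_of_lt hF2 hFub
  have hxlb : 4.72 ≤ s - 3 := by nlinarith
  have hxub : s - 3 ≤ 38.8211 := by linarith
  have hTF : F ≤ s - 3 - p * r / 2 := hFub.le
  exact aux_convex (s - 3) (p * r) F hF2 hTF
    (aux_q2 (s - 3) (p * r) hxlb hxub halb haub)
    (aux_qT (s - 3) (p * r) hxlb halb haub) hquad
end

section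
/- Let n ≥ 147 be a natural number and set φ = √(12n − 3) − 3. If a real number F satisfies F ≥ 2 and F² − (2φ − π√3)·F + (1 − π√3/6)·φ² > 0 and F < φ − π√3/2, then F < (φ − 8)/11, i.e., F < (1/11)·√(12n − 3) − 1. -/
set_option maxHeartbeats 1000000


theorem F_upper_bound (n : ℕ) (hn : 147 ≤ n) (F : ℝ) (hF2 : 2 ≤ F)
    (hquad : F ^ 2 - (2 * (Real.sqrt (12 * n - 3) - 3) - Real.pi * Real.sqrt 3) * F
        + (1 - Real.pi * Real.sqrt 3 / 6) * (Real.sqrt (12 * n - 3) - 3) ^ 2 > 0)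
    (hFub : F < (Real.sqrt (12 * n - 3) - 3) - Real.pi * Real.sqrt 3 / 2) :
    F < (1 / 11) * Real.sqrt (12 * n - 3) - 1 := by
  set s := Real.sqrt (12 * (n : ℝ) - 3) with hs
  have hn' : (1761 : ℝ) ≤ 12 * (n : ℝ) - 3 := by
    have : (147 : ℝ) ≤ (n : ℝ) := by exact_mod_cast hn
    linarith
  have hs0 : 0 ≤ s := Real.sqrt_nonneg _
  have hs2 : s ^ 2 = 12 * (n : ℝ) - 3 := Real.sq_sqrt (by linarith)
  have hsge : (41.96 : ℝ) ≤ s := by nlinarith [hs2, hs0, hn']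
  have ht0 : (0 : ℝ) ≤ Real.sqrt 3 := Real.sqrt_nonneg _
  have ht2 : Real.sqrt 3 ^ 2 = 3 := Real.sq_sqrt (by norm_num)
  have htl : (1.732 : ℝ) ≤ Real.sqrt 3 := by nlinarith [ht2, ht0]
  have hpil : (3.141592 : ℝ) ≤ Real.pi := le_of_lt Real.pi_gt_d6
  have hpt : (5.4412 : ℝ) ≤ Real.pi * Real.sqrt 3 := by nlinarith [hpil, htl]
  have hpt2 : (Real.pi * Real.sqrt 3) ^ 2 = 3 * Real.pi ^ 2 := by
    rw [mul_pow, ht2]; ring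
  have hQ : (0 : ℝ) ≤ (s - 3) ^ 2 / 6 - (s - 3) / 11 + 8 / 11 := by nlinarith [hsge]
  have hkey : (Real.pi * Real.sqrt 3 / 6) * (s - 3) ^ 2 - Real.pi * Real.sqrt 3 * (s - 3)
      + 3 * Real.pi ^ 2 / 4
      > ((10 * (s - 3) + 8) / 11 - Real.pi * Real.sqrt 3 / 2) ^ 2 := by
    nlinarith [mul_nonneg (sub_nonneg.mpr hpt) hQ, hpt2, hsge, sq_nonneg (s - 42), hpt]
  by_contra hcon
  push_neg at hcon
  have hvF : (0 : ℝ) < (s - 3) - Real.pi * Real.sqrt 3 / 2 - F := by linarith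
  have hFc : (0 : ℝ) ≤ F - ((1 / 11) * s - 1) := by linarith
  nlinarith [hquad, hkey, hpt2, sq_nonneg (F - ((1 / 11) * s - 1)),
    mul_nonneg hFc hvF.le]
end
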